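/- Let G be a finite DAG and let G' be obtained by contracting an edge (u, v) with ts(v) = ts(u) + 1 into a hyper node w. Then G' is acyclic. -/
import Mathlib


variable {V : Type*}

/-- A directed path of length `k` (number of edges) from `u` to `v` in the digraph `E`. -/
def IsPathOfLength (E : V → V → Prop) (u v : V) (k : ℕ) : Prop :=
  ∃ f : Fin (k + 1) → V, f 0 = u ∧ f (Fin.last k) = v ∧
    ∀ i : Fin k, E (f i.castSucc) (f i.succ)

/-- A directed graph (relation) is acyclic: no nontrivial directed cycle. -/
def Acyclic (E : V → V → Prop) : Prop := ∀ v, ¬ Relation.TransGen E v v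

/-- `ts` is the topological-stage function of `E`: `ts v` is the length of the
longest directed path in `E` ending at `v`. -/
def IsTopStage (E : V → V → Prop) (ts : V → ℕ) : Prop :=
  ∀ v, IsGreatest {k | ∃ u, IsPathOfLength E u v k} (ts v)

/-- Contraction of the pair {u, v} in the digraph `E`: v is identified with u
(every endpoint equal to v is redirected to u) and self-loops are removed. -/
def ContractRel [DecidableEq V] (E : V → V → Prop) (u v : V) (x y : V) : Prop :=
  x ≠ y ∧ ∃ a b : V, E a b ∧ (if a = v then u else a) = x ∧ (if b = v then u else b) = y

/-- Extend a path by one edge. -/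
lemma IsPathOfLength.snoc {E : V → V → Prop} {p a b : V} {k : ℕ}
    (h : IsPathOfLength E p a k) (hab : E a b) : IsPathOfLength E p b (k + 1) := by
  obtain ⟨f, h0, hl, hs⟩ := h
  refine ⟨Fin.snoc f b, ?_, ?_, ?_⟩
  · simpa [Fin.snoc] using h0
  · simp [Fin.snoc_last]
  · intro i
    rcases eq_or_lt_of_le (Fin.le_last i) with hi | hi
    · have h1 : i.castSucc = (Fin.last k).castSucc := by rw [hi]
      have h2 : i.succ = Fin.last (k + 1) := by
        rw [hi]; ext; simp [Fin.val_succ]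
      rw [h1, h2, Fin.snoc_castSucc, Fin.snoc_last, hl]
      exact hab
    · have hik : (i : ℕ) < k := hi
      have h1 : i.castSucc = Fin.castSucc (⟨i, Nat.lt_succ_of_lt hik⟩ : Fin (k + 1)) := rfl
      have h2 : i.succ = Fin.castSucc (⟨i + 1, Nat.succ_lt_succ hik⟩ : Fin (k + 1)) := by
        ext; simp [Fin.val_succ]
      rw [h1, h2, Fin.snoc_castSucc, Fin.snoc_castSucc]
      exact hs ⟨i, hik⟩

/-- Along an edge, the topological stage strictly increases. -/
lemma ts_lt_of_edge {E : V → V → Prop} {ts : V → ℕ} (hts : IsTopStage E ts)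
    {a b : V} (hab : E a b) : ts a < ts b := by
  obtain ⟨⟨p, hp⟩, _⟩ := hts a
  have : ts a + 1 ∈ {k | ∃ u, IsPathOfLength E u b k} := ⟨p, hp.snoc hab⟩
  exact Nat.lt_of_succ_le ((hts b).2 this)

/-- Contracting an edge (u, v) of a finite DAG with ts v = ts u + 1 into a
hyper node yields an acyclic graph. -/
theorem edge_stage_succ_contract_acyclic [Fintype V] [DecidableEq V]
    (E : V → V → Prop) (hacyc : Acyclic E) (ts : V → ℕ) (hts : IsTopStage E ts)
    (u v : V) (he : E u v) (hstage : ts v = ts u + 1) :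
    Acyclic (ContractRel E u v) := by
  set φ : V → ℕ := fun x => 2 * ts x + (if x = u then 1 else 0) with hφ
  have step : ∀ x y, ContractRel E u v x y → φ x < φ y := by
    rintro x y ⟨hxy, a, b, hab, hax, hby⟩
    have hedge := ts_lt_of_edge hts hab
    by_cases hav : a = v <;> by_cases hbv : b = v
    · rw [if_pos hav] at hax; rw [if_pos hbv] at hby
      exact absurd (hax.symm.trans hby) hxy
    · rw [if_pos hav] at hax; rw [if_neg hbv] at hby
      rw [← hax, ← hby]
      rw [hav] at hedge
      have h1 : ts u + 1 < ts b := by omega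
      by_cases hb : b = u
      · rw [hb] at h1; omega
      · simp only [hφ, if_pos rfl, if_neg hb, eq_self_iff_true, if_true]; omega
    · rw [if_neg hav] at hax; rw [if_pos hbv] at hby
      rw [← hax, ← hby]
      rw [hbv] at hedge
      have h1 : ts a < ts u + 1 := by omega
      have hau : a ≠ u := fun h => hxy (by rw [← hax, h, hby])
      simp only [hφ, if_pos rfl, if_neg hau, eq_self_iff_true, if_true]; omega
    · rw [if_neg hav] at hax; rw [if_neg hbv] at hby
      rw [← hax, ← hby]
      simp only [hφ]
      split_ifs <;> omega
  intro x hcyc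
  have key : ∀ y, Relation.TransGen (ContractRel E u v) x y → φ x < φ y := by
    intro y hy
    induction hy with
    | single h => exact step _ _ h
    | tail _ h ih => exact ih.trans (step _ _ h)
  exact lt_irrefl _ (key x hcyc)
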